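/- Given (u0,u1) ∈ H × H, define for ℓ ≥ 0 the functions v_{ℓ,0}(t) = (−1)^ℓ [ Σ_{j=0}^{ℓ} binom(ℓ, j) ((−t)^j / j!) A^j e^{−tA}(u0 + u1) − Σ_{j=0}^{ℓ−1} binom(ℓ−1, j) ((−t)^j / j!) A^j e^{−tA} u0 ] (the second sum being empty for ℓ = 0). Then v_{0,0}(t) = e^{−tA}(u0+u1), and for every ℓ ≥ 1 and t ≥ 0: v_{ℓ,0}'(t) + A v_{ℓ,0}(t) = −v_{ℓ−1,0}'(t), and v_{ℓ,0}(0) = (−1)^ℓ u1. -/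

import Mathlib

open scoped RealInnerProductSpace

universe u

/-- The auxiliary profiles `v_{ℓ,0}(t)` from Section 2.2.1. -/
noncomputable def vl0 {H : Type u} [NormedAddCommGroup H] [InnerProductSpace ℝ H]
    [CompleteSpace H] (A : H →L[ℝ] H) (u0 u1 : H) (ℓ : ℕ) (t : ℝ) : H :=
  ((-1 : ℝ) ^ ℓ) •
    ((∑ j ∈ Finset.range (ℓ + 1),
        ((ℓ.choose j : ℝ) * ((-t) ^ j / (Nat.factorial j : ℝ))) •
          ((A ^ j) (NormedSpace.exp ((-t) • A) (u0 + u1))))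
      - ∑ j ∈ Finset.range ℓ,
          (((ℓ - 1).choose j : ℝ) * ((-t) ^ j / (Nat.factorial j : ℝ))) •
            ((A ^ j) (NormedSpace.exp ((-t) • A) u0)))

/-!
Write `g_j(t) = ((-t)^j / j!) • A^j e^{-tA} y`. Since `A` commutes with `e^{-tA}`, the operator
`∂ₜ + A` kills `g_0` and maps `g_{j+1}` to `-A g_j = ∂ₜ g_j - (∂ₜ + A) g_j`. By Pascal's rule the
binomial sums `S_n = ∑ⱼ C(n, j) g_j` therefore satisfy `(∂ₜ + A) S_{n+1} = ∂ₜ S_n`, and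
`v_{ℓ,0} = (-1)^ℓ (S_ℓ(u0 + u1) - S_{ℓ-1}(u0))` inherits this recursion. At `t = 0` only `g_0 = y`
survives.
-/

open Finset
open NormedSpace (exp)

section

variable {E : Type*} [NormedAddCommGroup E] [NormedSpace ℝ E] (A : E →L[ℝ] E)

theorem deriv_sum_nsmul {ι : Type*} (s : Finset ι) (c : ι → ℕ) {f : ι → ℝ → E} {t : ℝ}
    (hf : ∀ i ∈ s, DifferentiableAt ℝ (f i) t) :
    deriv (fun t => ∑ i ∈ s, c i • f i t) t = ∑ i ∈ s, c i • deriv (f i) t := by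
  rw [deriv_fun_sum (A := fun i t => c i • f i t) fun i hi => (hf i hi).const_smul (c i)]
  exact sum_congr rfl fun i hi => deriv_const_smul (c i) (hf i hi)

noncomputable def heatOp (f : ℝ → E) (t : ℝ) : E := deriv f t + A (f t)

theorem heatOp_sum_nsmul {ι : Type*} (s : Finset ι) (c : ι → ℕ) {f : ι → ℝ → E} {t : ℝ}
    (hf : ∀ i ∈ s, DifferentiableAt ℝ (f i) t) :
    heatOp A (fun t => ∑ i ∈ s, c i • f i t) t = ∑ i ∈ s, c i • heatOp A (f i) t := by
  simp only [heatOp, deriv_sum_nsmul s c hf, map_sum, map_nsmul, smul_add, sum_add_distrib]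

theorem heatOp_const_smul_sub {f g : ℝ → E} {t : ℝ} (a : ℝ) (hf : DifferentiableAt ℝ f t)
    (hg : DifferentiableAt ℝ g t) :
    heatOp A (fun s => a • (f s - g s)) t = a • (heatOp A f t - heatOp A g t) := by
  rw [heatOp, heatOp, heatOp, deriv_fun_const_smul_field, deriv_fun_sub hf hg, map_smul, map_sub]
  module

noncomputable def heatTerm (y : E) (j : ℕ) (t : ℝ) : E :=
  ((-t) ^ j / j.factorial) • (A ^ j) (exp ((-t) • A) y)

theorem heatTerm_zero (y : E) : heatTerm A y 0 = fun t => exp ((-t) • A) y := by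
  funext t
  simp [heatTerm]

theorem heatTerm_apply_zero (y : E) : ∀ j, heatTerm A y j 0 = if j = 0 then y else 0
  | 0 => by simp [heatTerm_zero]
  | j + 1 => by simp [heatTerm]

noncomputable def heatBinomSum (y : E) (n : ℕ) (t : ℝ) : E :=
  ∑ j ∈ range (n + 1), n.choose j • heatTerm A y j t

theorem heatBinomSum_zero (y : E) : heatBinomSum A y 0 = heatTerm A y 0 := by
  funext t
  simp [heatBinomSum]

theorem heatBinomSum_apply_zero (y : E) (n : ℕ) : heatBinomSum A y n 0 = y := by
  simp [heatBinomSum, heatTerm_apply_zero]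

/-- `S_{n-1}`, with `S_{-1} = 0`: the second sum in `vl0`. -/
noncomputable def heatBinomSumPrev (y : E) : ℕ → ℝ → E
  | 0 => 0
  | n + 1 => heatBinomSum A y n

variable [CompleteSpace E]

theorem hasDerivAt_exp_neg_smul_apply (y : E) (t : ℝ) :
    HasDerivAt (fun s : ℝ => exp ((-s) • A) y) (-A (exp ((-t) • A) y)) t := by
  have hexp : HasDerivAt (fun s : ℝ => exp ((-s) • A)) (-(A * exp ((-t) • A))) t := by
    simpa [Function.comp_def] using
      (hasDerivAt_exp_smul_const' A (-t)).scomp t (hasDerivAt_neg t)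
  simpa [Function.comp_def] using
    (ContinuousLinearMap.apply ℝ E y).hasFDerivAt.comp_hasDerivAt t hexp

theorem hasDerivAt_smul_pow_apply_exp_neg_smul {c : ℝ → ℝ} {c' t : ℝ} (hc : HasDerivAt c c' t)
    (j : ℕ) (y : E) :
    HasDerivAt (fun s => c s • (A ^ j) (exp ((-s) • A) y))
      (c' • (A ^ j) (exp ((-t) • A) y) - A (c t • (A ^ j) (exp ((-t) • A) y))) t := by
  refine (hc.fun_smul ((A ^ j).hasFDerivAt.comp_hasDerivAt t
    (hasDerivAt_exp_neg_smul_apply A y t))).congr_deriv ?_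
  have hcomm : A ((A ^ j) (exp ((-t) • A) y)) = (A ^ j) (A (exp ((-t) • A) y)) :=
    DFunLike.congr_fun (Commute.self_pow A j).eq _
  simp only [Function.comp_apply, map_smul, map_neg, hcomm]
  module

theorem hasDerivAt_neg_pow_div_factorial (j : ℕ) (t : ℝ) :
    HasDerivAt (fun s : ℝ => (-s) ^ (j + 1) / (j + 1).factorial)
      (-((-t) ^ j / j.factorial)) t := by
  have h := ((hasDerivAt_pow (j + 1) (-t)).scomp t (hasDerivAt_neg t)).div_const
    ((j + 1).factorial : ℝ)
  refine h.congr_deriv ?_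
  rw [Nat.factorial_succ]
  push_cast
  field_simp
  simp

theorem hasDerivAt_heatTerm_zero (y : E) (t : ℝ) :
    HasDerivAt (heatTerm A y 0) (-A (heatTerm A y 0 t)) t := by
  rw [heatTerm_zero]
  exact hasDerivAt_exp_neg_smul_apply A y t

theorem hasDerivAt_heatTerm_succ (y : E) (j : ℕ) (t : ℝ) :
    HasDerivAt (heatTerm A y (j + 1)) (-A (heatTerm A y j t) - A (heatTerm A y (j + 1) t)) t := by
  refine (hasDerivAt_smul_pow_apply_exp_neg_smul A
    (hasDerivAt_neg_pow_div_factorial j t) (j + 1) y).congr_deriv ?_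
  simp only [heatTerm, map_smul, pow_succ', neg_smul]
  rfl

theorem differentiable_heatTerm (y : E) : ∀ j, Differentiable ℝ (heatTerm A y j)
  | 0 => fun t => (hasDerivAt_heatTerm_zero A y t).differentiableAt
  | j + 1 => fun t => (hasDerivAt_heatTerm_succ A y j t).differentiableAt

theorem heatOp_heatTerm_zero (y : E) (t : ℝ) : heatOp A (heatTerm A y 0) t = 0 := by
  rw [heatOp, (hasDerivAt_heatTerm_zero A y t).deriv, neg_add_cancel]

theorem heatOp_heatTerm_succ (y : E) (j : ℕ) (t : ℝ) :
    heatOp A (heatTerm A y (j + 1)) t = -A (heatTerm A y j t) := by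
  rw [heatOp, (hasDerivAt_heatTerm_succ A y j t).deriv, sub_add_cancel]

theorem differentiable_heatBinomSum (y : E) (n : ℕ) : Differentiable ℝ (heatBinomSum A y n) :=
  Differentiable.fun_sum fun j _ => (differentiable_heatTerm A y j).fun_const_smul _

theorem heatOp_heatBinomSum_succ (y : E) (n : ℕ) (t : ℝ) :
    heatOp A (heatBinomSum A y (n + 1)) t = deriv (heatBinomSum A y n) t := by
  have hg (j : ℕ) : DifferentiableAt ℝ (heatTerm A y j) t :=
    (differentiable_heatTerm A y j).differentiableAt
  unfold heatBinomSum
  rw [heatOp_sum_nsmul A _ _ fun j _ => hg j,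
    sum_choose_succ_nsmul (fun j _ => heatOp A (heatTerm A y j) t),
    deriv_sum_nsmul _ _ fun j _ => hg j, ← sum_add_distrib]
  refine sum_congr rfl fun j _ => ?_
  rw [← smul_add, heatOp_heatTerm_succ, heatOp, add_neg_cancel_right]

theorem differentiable_heatBinomSumPrev (y : E) : ∀ n, Differentiable ℝ (heatBinomSumPrev A y n)
  | 0 => differentiable_const 0
  | n + 1 => differentiable_heatBinomSum A y n

theorem heatOp_heatBinomSumPrev_succ (y : E) (t : ℝ) :
    ∀ n, heatOp A (heatBinomSumPrev A y (n + 1)) t = deriv (heatBinomSumPrev A y n) t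
  | 0 => by
    simp [heatBinomSumPrev, heatBinomSum_zero, heatOp_heatTerm_zero]
  | n + 1 => heatOp_heatBinomSum_succ A y n t

end

section

variable {H : Type u} [NormedAddCommGroup H] [InnerProductSpace ℝ H] [CompleteSpace H]
  (A : H →L[ℝ] H) (u0 u1 : H)

theorem vl0_eq (ℓ : ℕ) :
    vl0 A u0 u1 ℓ = fun t => (-1 : ℝ) ^ ℓ •
      (heatBinomSum A (u0 + u1) ℓ t - heatBinomSumPrev A u0 ℓ t) := by
  funext t
  cases ℓ <;>
    simp [vl0, heatBinomSum, heatBinomSumPrev, heatTerm, mul_smul, Nat.cast_smul_eq_nsmul]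

theorem heatOp_vl0_succ (m : ℕ) (t : ℝ) :
    heatOp A (vl0 A u0 u1 (m + 1)) t = -deriv (vl0 A u0 u1 m) t := by
  have hS := differentiable_heatBinomSum A (u0 + u1)
  have hT := differentiable_heatBinomSumPrev A u0
  rw [vl0_eq, vl0_eq, heatOp_const_smul_sub A _ (hS _ t) (hT _ t), heatOp_heatBinomSum_succ,
    heatOp_heatBinomSumPrev_succ, deriv_fun_const_smul_field, deriv_fun_sub (hS _ t) (hT _ t),
    pow_succ, mul_neg_one, neg_smul]

theorem vl0_succ_apply_zero (m : ℕ) : vl0 A u0 u1 (m + 1) 0 = (-1 : ℝ) ^ (m + 1) • u1 := by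
  simp [vl0_eq, heatBinomSum_apply_zero, heatBinomSumPrev]

end

theorem stmt_12 {H : Type u} [NormedAddCommGroup H] [InnerProductSpace ℝ H] [CompleteSpace H]
    (A : H →L[ℝ] H)
    (u0 u1 : H) :
    (∀ t : ℝ, vl0 A u0 u1 0 t = NormedSpace.exp ((-t) • A) (u0 + u1))
      ∧ ∀ ℓ : ℕ, 1 ≤ ℓ →
          (∀ t ≥ (0:ℝ),
            deriv (vl0 A u0 u1 ℓ) t + A (vl0 A u0 u1 ℓ t)
              = -deriv (vl0 A u0 u1 (ℓ - 1)) t)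
          ∧ vl0 A u0 u1 ℓ 0 = ((-1 : ℝ) ^ ℓ) • u1 := by
  refine ⟨fun t => by simp [vl0], fun ℓ hℓ => ?_⟩
  obtain ⟨m, rfl⟩ := Nat.exists_eq_add_of_le' hℓ
  exact ⟨fun t _ => heatOp_vl0_succ A u0 u1 m t, vl0_succ_apply_zero A u0 u1 m⟩
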